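/- arXiv:2601.16343 — 8 statements merged into one kernel-verified Lean document; each statement's English description precedes it below -/
import Mathlib

section
/- Let {(η_j, φ_j)}_{j=1}^d be an ensemble of d linearly independent unit vectors in ℂ^d with probabilities η_j > 0, and set ρ = ∑_j η_j |φ_j⟩⟨φ_j|. Then the POVM with E_0 = I − λ_min(ρ)·ρ^{−1} and E_j = η_j λ_min(ρ)·ρ^{−1}|φ_j⟩⟨φ_j|ρ^{−1} is a valid POVM (all elements positive semidefinite, summing to I), it satisfies tr(E_i |φ_j⟩⟨φ_j|) = (λ_min(ρ)/η_j)·δ_{ij} for i,j ∈ {1,…,d}, and the success probability ∑_j η_j tr(E_j |φ_j⟩⟨φ_j|) equals d·λ_min(ρ). -/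
open Matrix BigOperators
open scoped ComplexOrder

/-! The matrix ρ = ∑ⱼ ηⱼ|φⱼ⟩⟨φⱼ| is positive definite since the φⱼ span, and linear independence
makes ψⱼ = ρ⁻¹φⱼ the dual family: comparing coefficients in ρψⱼ = ∑ₖ ηₖ⟨φₖ, ψⱼ⟩φₖ = φⱼ gives
⟨φᵢ, ψⱼ⟩ = δᵢⱼ/ηᵢ. Hence Eⱼ = ηⱼλ|ψⱼ⟩⟨ψⱼ| is positive, tr(Eᵢ|φⱼ⟩⟨φⱼ|) = ηᵢλ|⟨φⱼ, ψᵢ⟩|² = δᵢⱼλ/ηⱼ,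
and ∑ⱼ Eⱼ = λρ⁻¹ρρ⁻¹ = λρ⁻¹. Finally E₀ = f(ρ) for f(x) = 1 − λ/x, which is nonnegative on the
spectrum of ρ because λ is its least eigenvalue. -/

open scoped MatrixOrder in
lemma Matrix.PosDef.posSemidef_one_sub_smul_inv {n 𝕜 : Type*} [Fintype n] [DecidableEq n]
    [RCLike 𝕜] {A : Matrix n n 𝕜} (hA : A.PosDef) {c : ℝ} (hc : ∀ i, c ≤ hA.1.eigenvalues i) :
    (1 - c • A⁻¹).PosSemidef := by
  have hspec : spectrum ℝ A = Set.range hA.1.eigenvalues := hA.1.spectrum_real_eq_range_eigenvalues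
  -- discharges the continuity side conditions of the `cfc` lemmas below
  have hcont : ContinuousOn (fun x : ℝ => x⁻¹) (spectrum ℝ A) :=
    (hspec ▸ Set.finite_range _ : (spectrum ℝ A).Finite).continuousOn _
  have hcfc : cfc (fun x : ℝ => 1 - c * x⁻¹) A = 1 - c • A⁻¹ := by
    rw [cfc_sub _ _ A, cfc_const_one ℝ A, cfc_const_mul c (fun x : ℝ => x⁻¹) A,
      cfc_ringInverse_id _ hA.isUnit, nonsing_inv_eq_ringInverse]
  rw [← nonneg_iff_posSemidef, ← hcfc]
  refine cfc_nonneg fun x hx => ?_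
  obtain ⟨i, rfl⟩ := hspec ▸ hx
  rw [sub_nonneg, ← div_eq_mul_inv, div_le_one (hA.eigenvalues_pos i)]
  exact hc i

lemma Matrix.IsHermitian.mul_vecMulVec_star_mul {n α : Type*} [Fintype n] [CommSemiring α]
    [StarRing α] {B : Matrix n n α} (hB : B.IsHermitian) (v : n → α) :
    B * vecMulVec v (star v) * B = vecMulVec (B *ᵥ v) (star (B *ᵥ v)) := by
  rw [mul_vecMulVec, vecMulVec_mul, star_mulVec, hB.eq]

lemma Matrix.trace_vecMulVec_mul_vecMulVec {n α : Type*} [Fintype n] [CommSemiring α]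
    (a b c e : n → α) : trace (vecMulVec a b * vecMulVec c e) = (b ⬝ᵥ c) * (e ⬝ᵥ a) := by
  rw [vecMulVec_mul_vecMulVec, trace_vecMulVec, dotProduct_smul, smul_eq_mul, dotProduct_comm a e]

section FrameOperator

variable {ι n 𝕜 : Type*} [Fintype ι] [Fintype n] [RCLike 𝕜] {η : ι → ℝ} {φ : ι → n → 𝕜}

def frameOperator (η : ι → ℝ) (φ : ι → n → 𝕜) : Matrix n n 𝕜 :=
  ∑ j, η j • vecMulVec (φ j) (star (φ j))

lemma frameOperator_mulVec (η : ι → ℝ) (φ : ι → n → 𝕜) (x : n → 𝕜) :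
    frameOperator η φ *ᵥ x = ∑ j, (η j * (star (φ j) ⬝ᵥ x)) • φ j := by
  simp only [frameOperator, sum_mulVec, smul_mulVec, vecMulVec_mulVec, op_smul_eq_smul,
    ← smul_assoc, RCLike.real_smul_eq_coe_mul]

lemma star_dotProduct_frameOperator_mulVec (η : ι → ℝ) (φ : ι → n → 𝕜) (x : n → 𝕜) :
    star x ⬝ᵥ (frameOperator η φ *ᵥ x)
      = ∑ j, η j * (star (star (φ j) ⬝ᵥ x) * (star (φ j) ⬝ᵥ x)) := by
  simp only [frameOperator_mulVec, dotProduct_sum, dotProduct_smul, smul_eq_mul]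
  refine Finset.sum_congr rfl fun j _ => ?_
  rw [star_dotProduct x (φ j)]
  ring

lemma eq_zero_of_forall_star_dotProduct_eq_zero (hφ : Submodule.span 𝕜 (Set.range φ) = ⊤)
    {x : n → 𝕜} (hx : ∀ j, star (φ j) ⬝ᵥ x = 0) : x = 0 := by
  obtain ⟨c, hc⟩ := Submodule.mem_span_range_iff_exists_fun 𝕜 |>.mp (hφ ▸ Submodule.mem_top : x ∈ _)
  refine dotProduct_star_self_eq_zero.mp ?_
  nth_rewrite 2 [← hc]
  rw [dotProduct_sum]
  refine Finset.sum_eq_zero fun j _ => ?_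
  rw [dotProduct_smul, star_dotProduct, hx j, star_zero, smul_zero]

lemma frameOperator_posDef (hη : ∀ j, 0 < η j) (hφ : Submodule.span 𝕜 (Set.range φ) = ⊤) :
    (frameOperator η φ).PosDef := by
  have hpsd : (frameOperator η φ).PosSemidef :=
    posSemidef_sum _ fun j _ => (posSemidef_vecMulVec_self_star (φ j)).smul (hη j).le
  refine PosDef.of_dotProduct_mulVec_pos hpsd.1 fun x hx => ?_
  obtain ⟨j, hj⟩ : ∃ j, star (φ j) ⬝ᵥ x ≠ 0 := by
    by_contra! h
    exact hx (eq_zero_of_forall_star_dotProduct_eq_zero hφ h)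
  rw [star_dotProduct_frameOperator_mulVec]
  refine Finset.sum_pos' (fun k _ => ?_) ⟨j, Finset.mem_univ j, ?_⟩
  · exact mul_nonneg (RCLike.ofReal_nonneg.mpr (hη k).le) (star_mul_self_nonneg _)
  · exact mul_pos (RCLike.ofReal_pos.mpr (hη j)) (star_mul_self_pos (IsRegular.of_ne_zero hj))

lemma star_dotProduct_eq_of_frameOperator_mulVec_eq [DecidableEq ι] (hφ : LinearIndependent 𝕜 φ)
    (hη : ∀ j, η j ≠ 0) {u : n → 𝕜} {j : ι} (hu : frameOperator η φ *ᵥ u = φ j) (i : ι) :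
    star (φ i) ⬝ᵥ u = if i = j then (η i : 𝕜)⁻¹ else 0 := by
  have hcoeff := Fintype.linearIndependent_iffₛ.mp hφ _ (fun k => if k = j then 1 else 0)
    (by rw [← frameOperator_mulVec, hu]; simp) i
  have hηi : (η i : 𝕜) ≠ 0 := RCLike.ofReal_ne_zero.mpr (hη i)
  split_ifs at hcoeff ⊢
  · exact eq_inv_of_mul_eq_one_right hcoeff
  · exact (mul_eq_zero.mp hcoeff).resolve_left hηi

variable [DecidableEq n]

lemma star_dotProduct_frameOperator_inv_mulVec [DecidableEq ι] (hφ : LinearIndependent 𝕜 φ)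
    (hspan : Submodule.span 𝕜 (Set.range φ) = ⊤) (hη : ∀ j, 0 < η j) (i j : ι) :
    star (φ i) ⬝ᵥ ((frameOperator η φ)⁻¹ *ᵥ φ j) = if i = j then (η i : 𝕜)⁻¹ else 0 := by
  have hdet := (isUnit_iff_isUnit_det _).mp (frameOperator_posDef hη hspan).isUnit
  refine star_dotProduct_eq_of_frameOperator_mulVec_eq hφ (fun k => (hη k).ne') ?_ i
  rw [mulVec_mulVec, mul_nonsing_inv _ hdet, one_mulVec]

lemma trace_smul_frameOperator_inv_conj_mul_vecMulVec [DecidableEq ι]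
    (hφ : LinearIndependent 𝕜 φ) (hspan : Submodule.span 𝕜 (Set.range φ) = ⊤)
    (hη : ∀ j, 0 < η j) (c : ℝ) (i j : ι) :
    trace ((η i * c) • ((frameOperator η φ)⁻¹ * vecMulVec (φ i) (star (φ i))
      * (frameOperator η φ)⁻¹) * vecMulVec (φ j) (star (φ j)))
      = if i = j then ((c / η j : ℝ) : 𝕜) else 0 := by
  rw [(frameOperator_posDef hη hspan).inv.isHermitian.mul_vecMulVec_star_mul, smul_mul,
    trace_smul, trace_vecMulVec_mul_vecMulVec, star_dotProduct,
    star_dotProduct_frameOperator_inv_mulVec hφ hspan hη]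
  rcases eq_or_ne i j with rfl | hij
  · have hηi : (η i : 𝕜) ≠ 0 := RCLike.ofReal_ne_zero.mpr (hη i).ne'
    simp only [if_true, RCLike.star_def, map_inv₀, RCLike.conj_ofReal, RCLike.real_smul_eq_coe_mul]
    push_cast
    field_simp
  · simp [hij, hij.symm]

lemma sum_smul_frameOperator_inv_conj (hdet : IsUnit (frameOperator η φ).det) (c : ℝ) :
    ∑ j, (η j * c) • ((frameOperator η φ)⁻¹ * vecMulVec (φ j) (star (φ j))
      * (frameOperator η φ)⁻¹) = c • (frameOperator η φ)⁻¹ := by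
  calc _ = c • ((frameOperator η φ)⁻¹ * frameOperator η φ * (frameOperator η φ)⁻¹) := by
        simp only [frameOperator, Finset.mul_sum, Finset.sum_mul, Finset.smul_sum, mul_smul_comm,
          smul_mul_assoc, smul_smul, mul_comm c]
    _ = c • (frameOperator η φ)⁻¹ := by rw [nonsing_inv_mul _ hdet, one_mul]

end FrameOperator

theorem unambiguous_discrimination_povm_general
    (d : ℕ) (hd : 0 < d)
    (φ : Fin d → (Fin d → ℂ)) (hind : LinearIndependent ℂ φ)
    (η : Fin d → ℝ) (hη : ∀ j, 0 < η j)
    (ρ : Matrix (Fin d) (Fin d) ℂ)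
    (hρ : ρ = ∑ j, η j • vecMulVec (φ j) (star (φ j)))
    (hρher : ρ.IsHermitian)
    (lam : ℝ)
    (hlam : lam = Finset.univ.inf'
      (Finset.univ_nonempty_iff.mpr (Fin.pos_iff_nonempty.mp hd)) hρher.eigenvalues)
    (E₀ : Matrix (Fin d) (Fin d) ℂ)
    (hE0 : E₀ = 1 - lam • ρ⁻¹)
    (E : Fin d → Matrix (Fin d) (Fin d) ℂ)
    (hE : ∀ j, E j = (η j * lam) • (ρ⁻¹ * vecMulVec (φ j) (star (φ j)) * ρ⁻¹)) :
    E₀.PosSemidef ∧ (∀ j, (E j).PosSemidef) ∧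
    E₀ + ∑ j, E j = 1 ∧
    (∀ i j, (E i * vecMulVec (φ j) (star (φ j))).trace
      = if i = j then ((lam / η j : ℝ) : ℂ) else 0) ∧
    ∑ j, (η j : ℂ) * (E j * vecMulVec (φ j) (star (φ j))).trace = ((d * lam : ℝ) : ℂ) := by
  have hρF : ρ = frameOperator η φ := hρ
  have hspan := hind.span_eq_top_of_card_eq_finrank' (by simp)
  have hpd : (frameOperator η φ).PosDef := frameOperator_posDef hη hspan
  have hρpd : ρ.PosDef := hρF ▸ hpd
  have hlam_le : ∀ i, lam ≤ hρher.eigenvalues i :=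
    fun i => hlam ▸ Finset.inf'_le _ (Finset.mem_univ i)
  have hlam_pos : 0 < lam := hlam ▸ (Finset.lt_inf'_iff _).mpr fun i _ => hρpd.eigenvalues_pos i
  have htrace : ∀ i j, (E i * vecMulVec (φ j) (star (φ j))).trace
      = if i = j then ((lam / η j : ℝ) : ℂ) else 0 := fun i j => by
    rw [hE, hρF]
    exact trace_smul_frameOperator_inv_conj_mul_vecMulVec hind hspan hη lam i j
  refine ⟨hE0 ▸ hρpd.posSemidef_one_sub_smul_inv hlam_le, fun j => ?_, ?_, htrace, ?_⟩
  · rw [hE, hρher.inv.mul_vecMulVec_star_mul]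
    exact (posSemidef_vecMulVec_self_star _).smul (mul_pos (hη j) hlam_pos).le
  · rw [hE0, Finset.sum_congr rfl fun j _ => hE j, hρF,
      sum_smul_frameOperator_inv_conj ((isUnit_iff_isUnit_det _).mp hpd.isUnit),
      sub_add_cancel]
  · have hterm : ∀ j, (η j : ℂ) * ((lam / η j : ℝ) : ℂ) = lam := fun j => by
      push_cast
      field_simp [Complex.ofReal_ne_zero.mpr (hη j).ne']
    simp only [htrace, ↓reduceIte, hterm, Finset.sum_const, Finset.card_univ, Fintype.card_fin,
      nsmul_eq_mul]
    push_cast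
    ring

/-- the unambiguous-discrimination POVM built from `ρ⁻¹` is a valid POVM,
it never errs, and its success probability is `d·λ_min(ρ)`. -/
theorem unambiguous_discrimination_povm
    (d : ℕ) (hd : 0 < d)
    (φ : Fin d → (Fin d → ℂ)) (hind : LinearIndependent ℂ φ)
    (hunit : ∀ j, star (φ j) ⬝ᵥ φ j = 1)
    (η : Fin d → ℝ) (hη : ∀ j, 0 < η j) (hsum : ∑ j, η j = 1)
    (ρ : Matrix (Fin d) (Fin d) ℂ)
    (hρ : ρ = ∑ j, η j • vecMulVec (φ j) (star (φ j)))
    (hρher : ρ.IsHermitian)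
    (lam : ℝ)
    (hlam : lam = Finset.univ.inf'
      (Finset.univ_nonempty_iff.mpr (Fin.pos_iff_nonempty.mp hd)) hρher.eigenvalues)
    (E₀ : Matrix (Fin d) (Fin d) ℂ)
    (hE0 : E₀ = 1 - lam • ρ⁻¹)
    (E : Fin d → Matrix (Fin d) (Fin d) ℂ)
    (hE : ∀ j, E j = (η j * lam) • (ρ⁻¹ * vecMulVec (φ j) (star (φ j)) * ρ⁻¹)) :
    E₀.PosSemidef ∧ (∀ j, (E j).PosSemidef) ∧
    E₀ + ∑ j, E j = 1 ∧
    (∀ i j, (E i * vecMulVec (φ j) (star (φ j))).trace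
      = if i = j then ((lam / η j : ℝ) : ℂ) else 0) ∧
    ∑ j, (η j : ℂ) * (E j * vecMulVec (φ j) (star (φ j))).trace = ((d * lam : ℝ) : ℂ) :=
  unambiguous_discrimination_povm_general d hd φ hind η hη ρ hρ hρher lam hlam E₀ hE0 E hE
end

section
/- For a qubit state ρ = (I + r⃗·σ⃗)/2 with r⃗ = m·m⃗ + p·n⃗ (m⃗ ⊥ n⃗ unit vectors, m, p ≥ 0, m² + p² < 1, m + p ≤ 1), the matrix Z = I − n⃗·σ⃗ is positive semidefinite and satisfies Z = I − ∑_{i≠j} y_{ij}|m_j⟩⟨m_i| with y_12 = y_21 = 1, where |m_1⟩⟨m_1| = (I + m⃗·σ⃗)/2, |m_2⟩⟨m_2| = (I − m⃗·σ⃗)/2; consequently, any nonnegative p₁, p₂ with ρ ⪰ p₁|m_1⟩⟨m_1| + p₂|m_2⟩⟨m_2| satisfy p₁ + p₂ ≤ tr(Zρ) = 1 − p. -/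
open Matrix BigOperators
open scoped ComplexOrder

noncomputable def σx : Matrix (Fin 2) (Fin 2) ℂ := !![0, 1; 1, 0]
noncomputable def σy : Matrix (Fin 2) (Fin 2) ℂ := !![0, -Complex.I; Complex.I, 0]
noncomputable def σz : Matrix (Fin 2) (Fin 2) ℂ := !![1, 0; 0, -1]

/-- `a⃗·σ⃗` for a real Bloch vector `a⃗ ∈ ℝ³`. -/
noncomputable def pauli (a : Fin 3 → ℝ) : Matrix (Fin 2) (Fin 2) ℂ :=
  a 0 • σx + a 1 • σy + a 2 • σz

/-!
Since `n⃗·σ⃗` is a Hermitian involution, `Z = I − n⃗·σ⃗` satisfies `Zᴴ Z = 2 Z`, so `Z ⪰ 0`.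
Because `n⃗ ⊥ m⃗`, `tr(Z Mᵢ) = 1` for both projectors, and `tr(Z ρ) = 1 − n⃗·r⃗ = 1 − p`.
Weak duality: if `ρ − ∑ pᵢ Mᵢ ⪰ 0`, then `0 ≤ tr(Z (ρ − ∑ pᵢ Mᵢ)) = tr(Z ρ) − ∑ pᵢ`.
-/

namespace Matrix

variable {𝕜 n : Type*} [RCLike 𝕜] [Fintype n]

open scoped MatrixOrder in
theorem PosSemidef.trace_mul_nonneg {A B : Matrix n n 𝕜} (hA : A.PosSemidef)
    (hB : B.PosSemidef) : 0 ≤ (A * B).trace := by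
  classical
  obtain ⟨C, rfl⟩ := CStarAlgebra.nonneg_iff_eq_star_mul_self.mp hA.nonneg
  rw [star_eq_conjTranspose, mul_assoc, trace_mul_comm]
  exact (hB.mul_mul_conjTranspose_same C).trace_nonneg

theorem posSemidef_one_sub_of_isHermitian_of_mul_self [DecidableEq n] {U : Matrix n n 𝕜}
    (hU : U.IsHermitian) (hUU : U * U = 1) : (1 - U).PosSemidef := by
  have h : 1 - U = (2⁻¹ : ℝ) • ((1 - U)ᴴ * (1 - U)) := by
    simp only [conjTranspose_sub, conjTranspose_one, hU.eq, sub_mul, mul_sub, hUU,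
      Matrix.one_mul, Matrix.mul_one]
    module
  rw [h]
  exact (posSemidef_conjTranspose_mul_self _).smul (by norm_num)

theorem PosSemidef.sum_le_trace_mul {ι : Type*} [Fintype ι] {Z ρ : Matrix n n 𝕜}
    (hZ : Z.PosSemidef) (M : ι → Matrix n n 𝕜) (p : ι → ℝ) (hM : ∀ i, (Z * M i).trace = 1)
    (h : (ρ - ∑ i, p i • M i).PosSemidef) : ∑ i, p i ≤ RCLike.re (Z * ρ).trace := by
  have := (RCLike.nonneg_iff.mp (hZ.trace_mul_nonneg h)).1
  rw [mul_sub, trace_sub, Finset.mul_sum, trace_sum] at this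
  simpa [mul_smul_comm, trace_smul, hM, RCLike.real_smul_eq_coe_mul] using this

end Matrix

theorem pauli_eq (a : Fin 3 → ℝ) :
    pauli a = !![(a 2 : ℂ), a 0 - a 1 * Complex.I; a 0 + a 1 * Complex.I, -a 2] := by
  ext i j
  fin_cases i <;> fin_cases j <;> simp [pauli, σx, σy, σz, Complex.real_smul]
  ring

theorem pauli_isHermitian (a : Fin 3 → ℝ) : (pauli a).IsHermitian := by
  rw [pauli_eq]
  ext i j
  fin_cases i <;> fin_cases j <;> simp [Complex.ext_iff]

theorem pauli_add (a b : Fin 3 → ℝ) : pauli (a + b) = pauli a + pauli b := by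
  simp only [pauli, Pi.add_apply]
  module

theorem pauli_smul (x : ℝ) (a : Fin 3 → ℝ) : pauli (x • a) = x • pauli a := by
  simp only [pauli, Pi.smul_apply, smul_eq_mul]
  module

theorem pauli_neg (a : Fin 3 → ℝ) : pauli (-a) = -pauli a := by
  simp only [pauli, Pi.neg_apply]
  module

theorem trace_pauli (a : Fin 3 → ℝ) : (pauli a).trace = 0 := by
  simp [pauli_eq, trace_fin_two]

theorem trace_pauli_mul (a b : Fin 3 → ℝ) :
    (pauli a * pauli b).trace = ((2 * a ⬝ᵥ b : ℝ) : ℂ) := by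
  simp only [pauli_eq, mul_fin_two, trace_fin_two, dotProduct, Fin.sum_univ_three, of_apply,
    cons_val', cons_val_zero, cons_val_one, empty_val', cons_val_fin_one]
  push_cast
  linear_combination (-2 * (a 1 : ℂ) * b 1) * Complex.I_mul_I

theorem pauli_mul_self {a : Fin 3 → ℝ} (ha : a ⬝ᵥ a = 1) : pauli a * pauli a = 1 := by
  have ha' : (a 0 : ℂ) * a 0 + a 1 * a 1 + a 2 * a 2 = 1 := by
    simpa [dotProduct, Fin.sum_univ_three] using congrArg ((↑) : ℝ → ℂ) ha
  rw [pauli_eq, mul_fin_two]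
  ext i j
  fin_cases i <;> fin_cases j <;> simp [one_apply]
  · linear_combination ha' - (a 1 : ℂ) ^ 2 * Complex.I_mul_I
  · ring
  · ring
  · linear_combination ha' - (a 1 : ℂ) ^ 2 * Complex.I_mul_I

theorem trace_one_sub_pauli_mul_bloch (a b : Fin 3 → ℝ) :
    ((1 - pauli a) * ((2⁻¹ : ℝ) • (1 + pauli b))).trace = ((1 - a ⬝ᵥ b : ℝ) : ℂ) := by
  rw [mul_smul_comm, trace_smul, sub_mul, Matrix.one_mul, mul_add, Matrix.mul_one, trace_sub,
    trace_add, trace_add, trace_pauli_mul, trace_pauli, trace_pauli, trace_one, Fintype.card_fin,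
    Complex.real_smul]
  push_cast
  ring

theorem qubit_unambiguous_dual_certificate_general
    (mv nv : Fin 3 → ℝ)
    (hnn : ∑ i, nv i * nv i = 1)
    (hmn : ∑ i, mv i * nv i = 0)
    (m p : ℝ)
    (ρ Z M₁ M₂ : Matrix (Fin 2) (Fin 2) ℂ)
    (hρ : ρ = (2⁻¹ : ℝ) • ((1 : Matrix (Fin 2) (Fin 2) ℂ) + pauli (m • mv + p • nv)))
    (hZ : Z = 1 - pauli nv)
    (hM₁ : M₁ = (2⁻¹ : ℝ) • ((1 : Matrix (Fin 2) (Fin 2) ℂ) + pauli mv))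
    (hM₂ : M₂ = (2⁻¹ : ℝ) • ((1 : Matrix (Fin 2) (Fin 2) ℂ) - pauli mv)) :
    Z.PosSemidef ∧
    Z = M₁ + M₂ - pauli nv ∧
    (Z * ρ).trace = ((1 - p : ℝ) : ℂ) ∧
    ∀ p₁ p₂ : ℝ, 0 ≤ p₁ → 0 ≤ p₂ →
      (ρ - (p₁ • M₁ + p₂ • M₂)).PosSemidef → p₁ + p₂ ≤ 1 - p := by
  have hnn : nv ⬝ᵥ nv = 1 := hnn
  have hnm : nv ⬝ᵥ mv = 0 := by rw [dotProduct_comm]; exact hmn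
  have hZpsd : Z.PosSemidef :=
    hZ ▸ posSemidef_one_sub_of_isHermitian_of_mul_self (pauli_isHermitian nv) (pauli_mul_self hnn)
  have hZρ : (Z * ρ).trace = ((1 - p : ℝ) : ℂ) := by
    rw [hZ, hρ, trace_one_sub_pauli_mul_bloch, dotProduct_add, dotProduct_smul, dotProduct_smul,
      hnm, hnn]
    simp
  have hZM₁ : (Z * M₁).trace = 1 := by
    rw [hZ, hM₁, trace_one_sub_pauli_mul_bloch, hnm]
    simp
  have hZM₂ : (Z * M₂).trace = 1 := by
    rw [hZ, hM₂, sub_eq_add_neg (1 : Matrix _ _ ℂ) (pauli mv), ← pauli_neg, trace_one_sub_pauli_mul_bloch, dotProduct_neg, hnm]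
    simp
  refine ⟨hZpsd, by rw [hZ, hM₁, hM₂]; module, hZρ, fun p₁ p₂ _ _ h => ?_⟩
  have := hZpsd.sum_le_trace_mul ![M₁, M₂] ![p₁, p₂] (Fin.forall_fin_two.2 ⟨hZM₁, hZM₂⟩)
    (by simpa [Fin.sum_univ_two] using h)
  rw [hZρ] at this
  simpa [Fin.sum_univ_two] using this

/-- the dual certificate `Z = I − n⃗·σ⃗` is positive semidefinite,
coincides with `M₁ + M₂ − n⃗·σ⃗`, has `tr(Zρ) = 1 − p`, and hence any feasible
unambiguous decomposition has guessing probability at most `1 − p`. -/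
theorem qubit_unambiguous_dual_certificate
    (mv nv : Fin 3 → ℝ)
    (hmm : ∑ i, mv i * mv i = 1) (hnn : ∑ i, nv i * nv i = 1)
    (hmn : ∑ i, mv i * nv i = 0)
    (m p : ℝ) (hm : 0 ≤ m) (hp : 0 ≤ p) (hr : m ^ 2 + p ^ 2 < 1) (hmp : m + p ≤ 1)
    (ρ Z M₁ M₂ : Matrix (Fin 2) (Fin 2) ℂ)
    (hρ : ρ = (2⁻¹ : ℝ) • ((1 : Matrix (Fin 2) (Fin 2) ℂ) + pauli (m • mv + p • nv)))
    (hZ : Z = 1 - pauli nv)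
    (hM₁ : M₁ = (2⁻¹ : ℝ) • ((1 : Matrix (Fin 2) (Fin 2) ℂ) + pauli mv))
    (hM₂ : M₂ = (2⁻¹ : ℝ) • ((1 : Matrix (Fin 2) (Fin 2) ℂ) - pauli mv)) :
    Z.PosSemidef ∧
    Z = M₁ + M₂ - pauli nv ∧
    (Z * ρ).trace = ((1 - p : ℝ) : ℂ) ∧
    ∀ p₁ p₂ : ℝ, 0 ≤ p₁ → 0 ≤ p₂ →
      (ρ - (p₁ • M₁ + p₂ • M₂)).PosSemidef → p₁ + p₂ ≤ 1 - p :=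
  qubit_unambiguous_dual_certificate_general mv nv hnn hmn m p ρ Z M₁ M₂ hρ hZ hM₁ hM₂
end

section
/- For a qubit state r⃗ = m·m⃗ + p·n⃗ with m, p ≥ 0, r² = m² + p² < 1 and m + p > 1, setting p₁ = (1 − r²)/(2(1 − m)), p₀ = 1 − p₁, and p₀·u⃗ = p·n⃗ + (m − p₁)·m⃗, the vector u⃗ has norm at most 1 and r⃗ = p₀·u⃗ + p₁·m⃗ is a valid decomposition; moreover m − p₁ = (1 + p − m)(m + p − 1)/(2(1 − m)) > 0. -/
open BigOperators

/-- when `m + p > 1`, the decomposition `r⃗ = p₀·u⃗ + p₁·m⃗` with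
`p₁ = (1−r²)/(2(1−m))`, `p₀ = 1 − p₁`, `p₀·u⃗ = p·n⃗ + (m−p₁)·m⃗` is valid, and
`m − p₁ = (1+p−m)(m+p−1)/(2(1−m)) > 0`. -/
theorem qubit_unambiguous_decomposition_out_of_hull
    (mv nv : Fin 3 → ℝ)
    (hmm : ∑ i, mv i * mv i = 1) (hnn : ∑ i, nv i * nv i = 1)
    (hmn : ∑ i, mv i * nv i = 0)
    (m p r : ℝ) (hm : 0 ≤ m) (hp : 0 ≤ p)
    (hr2 : m ^ 2 + p ^ 2 = r ^ 2) (hr1 : r ^ 2 < 1) (hmp : 1 < m + p)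
    (p₁ p₀ : ℝ) (hp₁ : p₁ = (1 - r ^ 2) / (2 * (1 - m))) (hp₀ : p₀ = 1 - p₁)
    (u : Fin 3 → ℝ) (hu : u = p₀⁻¹ • (p • nv + (m - p₁) • mv)) :
    0 ≤ p₀ ∧ 0 ≤ p₁ ∧ p₀ + p₁ = 1 ∧
    (∑ i, u i * u i) ≤ 1 ∧
    m • mv + p • nv = p₀ • u + p₁ • mv ∧
    m - p₁ = (1 + p - m) * (m + p - 1) / (2 * (1 - m)) ∧ 0 < m - p₁ := by
  have hm1 : m < 1 := by nlinarith
  have hA : 0 < 1 - m := by linarith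
  have hppos : 0 < p := by nlinarith
  have hp₁' : p₁ * (2 * (1 - m)) = 1 - r ^ 2 := by
    rw [hp₁]; field_simp
  have hp₁nn : 0 ≤ p₁ := by
    rw [hp₁]; apply div_nonneg <;> linarith
  have hp₁lt1 : p₁ < 1 := by nlinarith [sq_nonneg (1 - m)]
  have hp₀pos : 0 < p₀ := by rw [hp₀]; linarith
  have hp₀ne : p₀ ≠ 0 := ne_of_gt hp₀pos
  have key : ∑ i, u i * u i =
      p₀⁻¹ ^ 2 * (p ^ 2 * (∑ i, nv i * nv i)
        + 2 * p * (m - p₁) * (∑ i, mv i * nv i)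
        + (m - p₁) ^ 2 * (∑ i, mv i * mv i)) := by
    subst hu
    simp only [Pi.smul_apply, Pi.add_apply, smul_eq_mul, Finset.mul_sum,
      ← Finset.sum_add_distrib]
    apply Finset.sum_congr rfl
    intro i _
    ring
  have heq : p ^ 2 + (m - p₁) ^ 2 = p₀ ^ 2 := by
    rw [hp₀]; nlinarith [hp₁']
  refine ⟨le_of_lt hp₀pos, hp₁nn, by rw [hp₀]; ring, ?_, ?_, ?_, ?_⟩
  · rw [key, hmm, hnn, hmn]
    have : p₀⁻¹ ^ 2 * (p ^ 2 * 1 + 2 * p * (m - p₁) * 0 + (m - p₁) ^ 2 * 1)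
        = p₀⁻¹ ^ 2 * p₀ ^ 2 := by rw [← heq]; ring
    rw [this, ← mul_pow, inv_mul_cancel₀ hp₀ne, one_pow]
  · rw [hu, smul_smul, mul_inv_cancel₀ hp₀ne, one_smul]
    funext i
    simp only [Pi.add_apply, Pi.smul_apply, smul_eq_mul]
    ring
  · rw [eq_div_iff (ne_of_gt (by linarith : (0:ℝ) < 2 * (1 - m)))]
    linear_combination -hp₁' - hr2
  · have h1 : 0 < (1 + p - m) * (m + p - 1) / (2 * (1 - m)) := by
      apply div_pos <;> nlinarith
    have h2 : m - p₁ = (1 + p - m) * (m + p - 1) / (2 * (1 - m)) := by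
      rw [eq_div_iff (ne_of_gt (by linarith : (0:ℝ) < 2 * (1 - m)))]
      linear_combination -hp₁' - hr2
    linarith [h2 ▸ h1]
end

section
/- For 0 ≤ Q < p < 1, define q = (p − Q)/(1 − Q). Then 0 < q < 1, and for orthonormal m⃗, n⃗ ∈ ℝ³ and r⃗ = m·m⃗ + p·n⃗ with m ≥ 0, m² + p² < 1, and Q ≤ (1 − m² − p²)/(2(1 − p)), the decomposition r⃗ = Q·n⃗ + p₁·r⃗₁ + p₂·r⃗₂ with r⃗_j = (−1)^{j+1}√(1−q²)·m⃗ + q·n⃗ and p_j = ((1 − Q) + (−1)^{j+1} m/√(1−q²))/2 is valid: p₁, p₂ ≥ 0, Q + p₁ + p₂ = 1, |r⃗₁| = |r⃗₂| = 1, and the weighted sum equals r⃗. -/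
open BigOperators

set_option maxHeartbeats 1000000 in
/-- for `Q ≤ Q_crit`, the FRIO decomposition
`r⃗ = Q·n⃗ + p₁·r⃗₁ + p₂·r⃗₂` with `r⃗_j = ±√(1−q²)·m⃗ + q·n⃗`, `q = (p−Q)/(1−Q)`, is valid. -/
theorem qubit_FRIO_decomposition_below_Qcrit
    (mv nv : Fin 3 → ℝ)
    (hmm : ∑ i, mv i * mv i = 1) (hnn : ∑ i, nv i * nv i = 1)
    (hmn : ∑ i, mv i * nv i = 0)
    (m p Q : ℝ) (hm : 0 ≤ m) (hr : m ^ 2 + p ^ 2 < 1)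
    (hQ0 : 0 ≤ Q) (hQp : Q < p) (hp1 : p < 1)
    (hQc : Q ≤ (1 - m ^ 2 - p ^ 2) / (2 * (1 - p)))
    (q : ℝ) (hq : q = (p - Q) / (1 - Q))
    (r₁ r₂ : Fin 3 → ℝ)
    (hr₁ : r₁ = Real.sqrt (1 - q ^ 2) • mv + q • nv)
    (hr₂ : r₂ = (-Real.sqrt (1 - q ^ 2)) • mv + q • nv)
    (p₁ p₂ : ℝ)
    (hp₁ : p₁ = ((1 - Q) + m / Real.sqrt (1 - q ^ 2)) / 2)
    (hp₂ : p₂ = ((1 - Q) - m / Real.sqrt (1 - q ^ 2)) / 2) :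
    0 < q ∧ q < 1 ∧ 0 ≤ p₁ ∧ 0 ≤ p₂ ∧ Q + p₁ + p₂ = 1 ∧
    (∑ i, r₁ i * r₁ i) = 1 ∧ (∑ i, r₂ i * r₂ i) = 1 ∧
    Q • nv + p₁ • r₁ + p₂ • r₂ = m • mv + p • nv := by
  have hQ1 : Q < 1 := hQp.trans hp1
  have h1Q : 0 < 1 - Q := by linarith
  have hq0 : 0 < q := by rw [hq]; exact div_pos (by linarith) h1Q
  have hq1 : q < 1 := by rw [hq, div_lt_one h1Q]; linarith
  have h1q2 : 0 < 1 - q ^ 2 := by nlinarith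
  obtain ⟨s, hs⟩ : ∃ s, s = Real.sqrt (1 - q ^ 2) := ⟨_, rfl⟩
  rw [← hs] at hr₁ hr₂ hp₁ hp₂
  have hspos : 0 < s := hs ▸ Real.sqrt_pos.mpr h1q2
  have hs2 : s ^ 2 = 1 - q ^ 2 := by rw [hs]; exact Real.sq_sqrt h1q2.le
  have hpq : (1 - Q) * q = p - Q := by rw [hq]; field_simp
  have hQc' : Q * (2 * (1 - p)) ≤ 1 - m ^ 2 - p ^ 2 := by
    rw [← le_div_iff₀ (by linarith)]; exact hQc
  have hm2 : m ^ 2 ≤ ((1 - Q) * s) ^ 2 := by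
    have : ((1 - Q) * s) ^ 2 = (1 - Q) ^ 2 - (p - Q) ^ 2 := by
      rw [mul_pow, hs2]; nlinarith [hpq]
    nlinarith
  have hmb : m ≤ (1 - Q) * s := by nlinarith [mul_pos h1Q hspos]
  have hsum : p₁ + p₂ = 1 - Q := by rw [hp₁, hp₂]; ring
  have hd : (p₁ - p₂) * s = m := by
    rw [hp₁, hp₂]
    field_simp
    ring
  have hp₂0 : 0 ≤ p₂ := by
    rw [hp₂]
    have : m / s ≤ 1 - Q := by
      rw [div_le_iff₀ hspos]; linarith [hmb]
    linarith
  have hp₁0 : 0 ≤ p₁ := by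
    rw [hp₁]
    have : 0 ≤ m / s := by positivity
    linarith
  refine ⟨hq0, hq1, hp₁0, hp₂0, by linarith, ?_, ?_, ?_⟩
  · rw [hr₁]
    simp only [Pi.add_apply, Pi.smul_apply, smul_eq_mul]
    rw [Fin.sum_univ_three] at hmm hnn hmn ⊢
    linear_combination s ^ 2 * hmm + (2 * s * q) * hmn + q ^ 2 * hnn + hs2
  · rw [hr₂]
    simp only [Pi.add_apply, Pi.smul_apply, smul_eq_mul]
    rw [Fin.sum_univ_three] at hmm hnn hmn ⊢
    linear_combination s ^ 2 * hmm - (2 * s * q) * hmn + q ^ 2 * hnn + hs2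
  · funext i
    simp only [hr₁, hr₂, Pi.add_apply, Pi.smul_apply, smul_eq_mul, neg_mul]
    linear_combination (mv i) * hd + (nv i * q) * hsum + (nv i) * hpq
end

section
/- For a qubit state r⃗ = m·m⃗ + p·n⃗ (m, p ≥ 0, r² = m²+p² < 1) measured in basis {±m⃗}, the steered ensemble has prior probabilities η_j = (1 + (−1)^{j+1}m)/2 and pure states whose squared overlap is |⟨φ₁, φ₂⟩|² = p²/(1 − m²). Equivalently: (1 + s⃗₁·s⃗₂)/2 = p²/(1−m²) where η_j(I + s⃗_j·σ⃗)/2 = √ρ |m_j⟩⟨m_j| √ρ. -/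
open Matrix BigOperators
open scoped ComplexOrder

/-- trace of the product of two Bloch-form matrices. -/
lemma bloch_pair_trace (a b : Fin 3 → ℝ) (x y : ℝ) :
    ((x • ((2⁻¹ : ℝ) • ((1 : Matrix (Fin 2) (Fin 2) ℂ) + pauli a))) *
     (y • ((2⁻¹ : ℝ) • ((1 : Matrix (Fin 2) (Fin 2) ℂ) + pauli b)))).trace
      = (x : ℂ) * (y : ℂ) / 2 * (1 + ((a 0 : ℂ) * b 0 + (a 1 : ℂ) * b 1 + (a 2 : ℂ) * b 2)) := by
  have hI2 : (Complex.I)^2 = -1 := Complex.I_sq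
  simp only [pauli, σx, σy, σz, Matrix.trace_fin_two, Matrix.mul_apply,
    Fin.sum_univ_two, Matrix.smul_apply, Matrix.add_apply, Matrix.sub_apply,
    Matrix.one_apply, Pi.add_apply, Pi.smul_apply,
    Matrix.cons_val', Matrix.cons_val_zero, Matrix.cons_val_one, Matrix.head_cons,
    Matrix.head_fin_const, Matrix.empty_val', Matrix.cons_val_fin_one, Matrix.of_apply,
    Complex.real_smul, smul_eq_mul]
  norm_num
  ring_nf
  simp only [hI2]
  ring

set_option maxHeartbeats 1600000 in
/-- the steered ensemble `η_j(I + s⃗_j·σ⃗)/2 = √ρ·M_j·√ρ` has priors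
`η_j = (1 ± m)/2` and squared overlap `(1 + s⃗₁·s⃗₂)/2 = p²/(1 − m²)`. -/
theorem qubit_steered_ensemble_overlap
    (mv nv : Fin 3 → ℝ)
    (hmm : ∑ i, mv i * mv i = 1) (hnn : ∑ i, nv i * nv i = 1)
    (hmn : ∑ i, mv i * nv i = 0)
    (m p : ℝ) (hm : 0 ≤ m) (hp : 0 ≤ p) (hr : m ^ 2 + p ^ 2 < 1)
    (ρ M₁ M₂ S : Matrix (Fin 2) (Fin 2) ℂ)
    (hρ : ρ = (2⁻¹ : ℝ) • ((1 : Matrix (Fin 2) (Fin 2) ℂ) + pauli (m • mv + p • nv)))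
    (hM₁ : M₁ = (2⁻¹ : ℝ) • ((1 : Matrix (Fin 2) (Fin 2) ℂ) + pauli mv))
    (hM₂ : M₂ = (2⁻¹ : ℝ) • ((1 : Matrix (Fin 2) (Fin 2) ℂ) - pauli mv))
    (hSpsd : S.PosSemidef) (hSsq : S * S = ρ)
    (η₁ η₂ : ℝ) (hη₁ : η₁ = (1 + m) / 2) (hη₂ : η₂ = (1 - m) / 2)
    (s₁ s₂ : Fin 3 → ℝ)
    (hs₁ : η₁ • ((2⁻¹ : ℝ) • ((1 : Matrix (Fin 2) (Fin 2) ℂ) + pauli s₁)) = S * M₁ * S)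
    (hs₂ : η₂ • ((2⁻¹ : ℝ) • ((1 : Matrix (Fin 2) (Fin 2) ℂ) + pauli s₂)) = S * M₂ * S) :
    (S * M₁ * S).trace = ((η₁ : ℝ) : ℂ) ∧
    (S * M₂ * S).trace = ((η₂ : ℝ) : ℂ) ∧
    (1 + ∑ i, s₁ i * s₂ i) / 2 = p ^ 2 / (1 - m ^ 2) := by
  rw [Fin.sum_univ_three] at hmm hnn hmn
  have hmm' : (mv 0:ℂ) * (mv 0) + (mv 1:ℂ) * (mv 1) + (mv 2:ℂ) * (mv 2) = 1 := by
    exact_mod_cast congrArg Complex.ofReal hmm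
  have hnn' : (nv 0:ℂ) * (nv 0) + (nv 1:ℂ) * (nv 1) + (nv 2:ℂ) * (nv 2) = 1 := by
    exact_mod_cast congrArg Complex.ofReal hnn
  have hmn' : (mv 0:ℂ) * (nv 0) + (mv 1:ℂ) * (nv 1) + (mv 2:ℂ) * (nv 2) = 0 := by
    exact_mod_cast congrArg Complex.ofReal hmn
  have hI2 : (Complex.I)^2 = -1 := Complex.I_sq
  have hI3 : (Complex.I)^3 = -Complex.I := by rw [pow_succ, hI2]; ring
  have hI4 : (Complex.I)^4 = 1 := by rw [pow_succ, hI3]; simp [Complex.I_mul_I]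
  -- trace of S*M₁*S is trace of ρ*M₁
  have hcyc₁ : (S * M₁ * S).trace = (ρ * M₁).trace := by
    rw [Matrix.trace_mul_comm, ← Matrix.mul_assoc, hSsq]
  have hcyc₂ : (S * M₂ * S).trace = (ρ * M₂).trace := by
    rw [Matrix.trace_mul_comm, ← Matrix.mul_assoc, hSsq]
  have htr₁ : (ρ * M₁).trace = ((η₁ : ℝ) : ℂ) := by
    subst hρ hM₁ hη₁
    simp only [pauli, σx, σy, σz, Matrix.trace_fin_two, Matrix.mul_apply,
      Fin.sum_univ_two, Matrix.smul_apply, Matrix.add_apply, Matrix.sub_apply,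
      Matrix.one_apply, Pi.add_apply, Pi.smul_apply,
      Matrix.cons_val', Matrix.cons_val_zero, Matrix.cons_val_one, Matrix.head_cons,
      Matrix.head_fin_const, Matrix.empty_val', Matrix.cons_val_fin_one, Matrix.of_apply,
      Complex.real_smul, smul_eq_mul]
    norm_num
    push_cast
    ring_nf
    simp only [hI2]
    linear_combination ((m:ℂ)/2) * hmm' + ((p:ℂ)/2) * hmn'
  have htr₂ : (ρ * M₂).trace = ((η₂ : ℝ) : ℂ) := by
    subst hρ hM₂ hη₂
    simp only [pauli, σx, σy, σz, Matrix.trace_fin_two, Matrix.mul_apply,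
      Fin.sum_univ_two, Matrix.smul_apply, Matrix.add_apply, Matrix.sub_apply,
      Matrix.one_apply, Pi.add_apply, Pi.smul_apply,
      Matrix.cons_val', Matrix.cons_val_zero, Matrix.cons_val_one, Matrix.head_cons,
      Matrix.head_fin_const, Matrix.empty_val', Matrix.cons_val_fin_one, Matrix.of_apply,
      Complex.real_smul, smul_eq_mul]
    norm_num
    push_cast
    ring_nf
    simp only [hI2]
    linear_combination (-(m:ℂ)/2) * hmm' + (-(p:ℂ)/2) * hmn'
  refine ⟨hcyc₁.trans htr₁, hcyc₂.trans htr₂, ?_⟩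
  -- the product trace
  have hT : (M₁ * (ρ * (M₂ * ρ))).trace = ((p : ℂ))^2 / 4 := by
    subst hρ hM₁ hM₂
    simp only [pauli, σx, σy, σz, Matrix.trace_fin_two, Matrix.mul_apply,
      Fin.sum_univ_two, Matrix.smul_apply, Matrix.add_apply, Matrix.sub_apply,
      Matrix.one_apply, Pi.add_apply, Pi.smul_apply,
      Matrix.cons_val', Matrix.cons_val_zero, Matrix.cons_val_one, Matrix.head_cons,
      Matrix.head_fin_const, Matrix.empty_val', Matrix.cons_val_fin_one, Matrix.of_apply,
      Complex.real_smul, smul_eq_mul]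
    norm_num
    ring_nf
    simp only [hI2, hI3, hI4]
    set α : ℂ := (mv 0:ℂ) * (mv 0) + (mv 1:ℂ) * (mv 1) + (mv 2:ℂ) * (mv 2) with hα
    set γ : ℂ := (mv 0:ℂ) * (nv 0) + (mv 1:ℂ) * (nv 1) + (mv 2:ℂ) * (nv 2) with hγ
    linear_combination (((p:ℂ)^2 - 1 - (m:ℂ)^2*α - 2*(p:ℂ)*(m:ℂ)*γ)/8) * hmm' +
      ((p:ℂ)^2*(1+α)/8) * hnn' + (-(p:ℂ)^2*γ/4) * hmn'
  have hprod : ((S * M₁ * S) * (S * M₂ * S)).trace = (M₁ * (ρ * (M₂ * ρ))).trace := by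
    have h1 : (S * M₁ * S) * (S * M₂ * S) = S * (M₁ * (ρ * (M₂ * S))) := by
      rw [← hSsq]; noncomm_ring
    rw [h1, Matrix.trace_mul_comm]
    have h2 : M₁ * (ρ * (M₂ * S)) * S = M₁ * (ρ * (M₂ * ρ)) := by
      rw [← hSsq]; noncomm_ring
    rw [h2]
  have hlhs : ((S * M₁ * S) * (S * M₂ * S)).trace
      = (η₁ : ℂ) * (η₂ : ℂ) / 2 * (1 + ((s₁ 0 : ℂ) * s₂ 0 + (s₁ 1 : ℂ) * s₂ 1 + (s₁ 2 : ℂ) * s₂ 2)) := by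
    have h := bloch_pair_trace s₁ s₂ η₁ η₂
    rw [hs₁, hs₂] at h
    exact h
  have key : (η₁ : ℂ) * (η₂ : ℂ) / 2 * (1 + ((s₁ 0 : ℂ) * s₂ 0 + (s₁ 1 : ℂ) * s₂ 1 + (s₁ 2 : ℂ) * s₂ 2))
      = ((p : ℂ))^2 / 4 := by
    rw [← hlhs, hprod, hT]
  have keyR : η₁ * η₂ / 2 * (1 + (s₁ 0 * s₂ 0 + s₁ 1 * s₂ 1 + s₁ 2 * s₂ 2)) = p^2 / 4 := by
    exact_mod_cast key
  have hm2 : (1 : ℝ) - m^2 ≠ 0 := by nlinarith [sq_nonneg p]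
  rw [Fin.sum_univ_three]
  rw [hη₁, hη₂] at keyR
  field_simp
  nlinarith [keyR]
end

section
/- Let ρ_γ = (1−γ)|φ⟩⟨φ| + (γ/d)I with 0 < γ < 1 and {m_j} an orthonormal basis unbiased to φ, and set ψ_j = √(d ρ_γ) m_j. Then each ψ_j is a unit vector, ∑_{j=1}^d |ψ_j⟩⟨ψ_j| = d ρ_γ, and ∑_j (1/d)|⟨ψ_j, m_j⟩|² = (tr√ρ_γ)²/d. -/
open Matrix
open scoped ComplexOrder MatrixOrder

/-!
With `P = |φ⟩⟨φ|`, the state is `ρ_γ = (1 - γ + γ/d) P + (γ/d) (1 - P)`, a nonnegative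
combination of the complementary projections `P` and `1 - P`; by uniqueness of positive square
roots, `√ρ_γ = √(1 - γ + γ/d) P + √(γ/d) (1 - P)`. Every matrix in the span of `P` and `1 - P`
has constant diagonal `tr / d` in a basis unbiased to `φ`, which gives the norms of the `ψ_j` and
their overlaps with the `m_j`; completeness `∑ |m_j⟩⟨m_j| = 1` gives `∑ |ψ_j⟩⟨ψ_j| = d ρ_γ`.
-/

namespace Matrix

variable {n : Type*} [Fintype n] {𝕜 : Type*} [RCLike 𝕜]

theorem isStarProjection_vecMulVec_self_star {φ : n → 𝕜} (hφ : star φ ⬝ᵥ φ = 1) :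
    IsStarProjection (vecMulVec φ (star φ)) where
  isIdempotentElem := by rw [IsIdempotentElem, vecMulVec_mul_vecMulVec, hφ, one_smul]
  isSelfAdjoint := (posSemidef_vecMulVec_self_star φ).isHermitian

theorem IsHermitian.star_mulVec_dotProduct {A : Matrix n n 𝕜} (hA : A.IsHermitian)
    (x y : n → 𝕜) : star (A *ᵥ x) ⬝ᵥ y = star x ⬝ᵥ A *ᵥ y := by
  rw [star_mulVec, hA.eq, dotProduct_mulVec]

theorem IsHermitian.ofReal_re_trace {A : Matrix n n ℂ} (hA : A.IsHermitian) :
    ((A.trace.re : ℝ) : ℂ) = A.trace :=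
  Complex.conj_eq_iff_re.mp (by rw [← Complex.star_def, ← trace_conjTranspose, hA.eq])

theorem star_dotProduct_vecMulVec_self_star_mulVec (φ x : n → ℂ) :
    star x ⬝ᵥ vecMulVec φ (star φ) *ᵥ x = Complex.normSq (star φ ⬝ᵥ x) := by
  rw [vecMulVec_mulVec, op_smul_eq_smul, dotProduct_smul, smul_eq_mul, star_dotProduct x φ,
    Complex.star_def, Complex.mul_conj]

variable [DecidableEq n]

theorem PosSemidef.eq_sqrt_smul_add_sqrt_smul_one_sub {p r : Matrix n n 𝕜}
    (hp : IsStarProjection p) {s t : ℝ} (hs : 0 ≤ s) (ht : 0 ≤ t) (hr : r.PosSemidef)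
    (hrr : r * r = s • p + t • (1 - p)) :
    r = √s • p + √t • (1 - p) := by
  have hsq : (√s • p + √t • (1 - p)) * (√s • p + √t • (1 - p)) = s • p + t • (1 - p) := by
    simp only [add_mul, mul_add, smul_mul_smul, mul_sub, sub_mul, mul_one, one_mul,
      hp.isIdempotentElem.eq, sub_self, smul_zero, zero_add, add_zero, sub_zero,
      Real.mul_self_sqrt hs, Real.mul_self_sqrt ht]
  have hnonneg : 0 ≤ √s • p + √t • (1 - p) :=
    add_nonneg (smul_nonneg (Real.sqrt_nonneg s) hp.nonneg)
      (smul_nonneg (Real.sqrt_nonneg t) hp.one_sub.nonneg)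
  exact (CFC.mul_self_eq_mul_self_iff r _ hr.nonneg hnonneg).mp (hrr.trans hsq.symm)

theorem sum_vecMulVec_self_star_eq_one {m : n → n → 𝕜}
    (hm : ∀ i j, star (m i) ⬝ᵥ m j = if i = j then 1 else 0) :
    ∑ j, vecMulVec (m j) (star (m j)) = 1 := by
  set C : Matrix n n 𝕜 := (of m)ᵀ
  have hCC : Cᴴ * C = 1 := by
    ext i j
    simpa [C, mul_apply, one_apply, dotProduct] using hm i j
  calc ∑ j, vecMulVec (m j) (star (m j)) = C * Cᴴ := by
        ext i k
        simp [C, mul_apply, vecMulVec_apply, sum_apply]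
    _ = 1 := mul_eq_one_comm.mp hCC

theorem sum_vecMulVec_mulVec_self_star (A : Matrix n n 𝕜) {m : n → n → 𝕜}
    (hm : ∀ i j, star (m i) ⬝ᵥ m j = if i = j then 1 else 0) :
    ∑ j, vecMulVec (A *ᵥ m j) (star (A *ᵥ m j)) = A * Aᴴ := by
  simp only [star_mulVec, ← mul_vecMulVec, ← vecMulVec_mul]
  rw [← Finset.sum_mul, ← Finset.mul_sum, sum_vecMulVec_self_star_eq_one hm, mul_one]

theorem star_dotProduct_mulVec_eq_trace_div_card {φ m : n → ℂ} (hφ : star φ ⬝ᵥ φ = 1)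
    (hm : star m ⬝ᵥ m = 1) (hub : Complex.normSq (star φ ⬝ᵥ m) = 1 / Fintype.card n)
    {S : Matrix n n ℂ} {α β : ℝ}
    (hS : S = α • vecMulVec φ (star φ) + β • (1 - vecMulVec φ (star φ))) :
    star m ⬝ᵥ S *ᵥ m = S.trace / Fintype.card n := by
  have : Nonempty n := by
    by_contra h
    simp [not_nonempty_iff.mp h] at hφ
  have hn : (Fintype.card n : ℂ) ≠ 0 := Nat.cast_ne_zero.mpr Fintype.card_ne_zero
  have htr : (vecMulVec φ (star φ)).trace = 1 := by rw [trace_vecMulVec, dotProduct_comm, hφ]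
  subst hS
  simp only [add_mulVec, smul_mulVec, sub_mulVec, one_mulVec, dotProduct_add,
    dotProduct_smul, dotProduct_sub, star_dotProduct_vecMulVec_self_star_mulVec, hub, hm,
    trace_add, trace_smul, trace_sub, trace_one, htr, Complex.real_smul]
  push_cast
  field_simp

end Matrix

theorem noisy_state_FRIO_decomposition_general
    (d : ℕ)
    (φ : Fin d → ℂ) (hφ : star φ ⬝ᵥ φ = 1)
    (γ : ℝ) (hγ0 : 0 < γ) (hγ1 : γ < 1)
    (m : Fin d → (Fin d → ℂ))
    (hm : ∀ i j, star (m i) ⬝ᵥ m j = if i = j then 1 else 0)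
    (hub : ∀ j, Complex.normSq (star φ ⬝ᵥ m j) = 1 / d)
    (ρ R : Matrix (Fin d) (Fin d) ℂ)
    (hρ : ρ = ((1 - γ : ℝ)) • vecMulVec φ (star φ) +
        ((γ / d : ℝ)) • (1 : Matrix (Fin d) (Fin d) ℂ))
    (hR : R.PosSemidef) (hRsq : R * R = ρ)
    (ψ : Fin d → (Fin d → ℂ)) (hψ : ∀ j, ψ j = Real.sqrt d • (R *ᵥ m j)) :
    (∀ j, star (ψ j) ⬝ᵥ ψ j = 1) ∧
    (∑ j, vecMulVec (ψ j) (star (ψ j))) = (d : ℝ) • ρ ∧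
    (∑ j, (1 / (d : ℝ)) * Complex.normSq (star (ψ j) ⬝ᵥ m j)) = (R.trace.re) ^ 2 / d := by
  have hd : d ≠ 0 := by rintro rfl; simp at hφ
  set P := vecMulVec φ (star φ)
  have hρP : ρ = (1 - γ + γ / d) • P + (γ / d) • (1 - P) := by rw [hρ]; module
  have hRP : R = √(1 - γ + γ / d) • P + √(γ / d) • (1 - P) :=
    hR.eq_sqrt_smul_add_sqrt_smul_one_sub (isStarProjection_vecMulVec_self_star hφ)
      (by positivity) (by positivity) (hRsq.trans hρP)
  have hdiag : ∀ j {S : Matrix (Fin d) (Fin d) ℂ} {α β : ℝ}, S = α • P + β • (1 - P) →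
      star (m j) ⬝ᵥ S *ᵥ m j = S.trace / d := fun j _ _ _ hS => by
    simpa using star_dotProduct_mulVec_eq_trace_div_card hφ (by simpa using hm j j)
      (by simpa using hub j) hS
  have hρtr : ρ.trace = 1 := by
    rw [hρ, trace_add, trace_smul, trace_smul, trace_vecMulVec, dotProduct_comm, hφ, trace_one,
      Fintype.card_fin, Complex.real_smul, Complex.real_smul]
    push_cast
    field_simp
    ring
  set A := √d • R
  have hψA : ψ = fun j => A *ᵥ m j := funext fun j => by rw [hψ, smul_mulVec]
  have hA : A.IsHermitian := hR.isHermitian.smul rfl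
  have hAA : A * A = (d : ℝ) • ρ := by
    rw [smul_mul_smul, Real.mul_self_sqrt (Nat.cast_nonneg d), hRsq]
  refine ⟨fun j => ?_, ?_, ?_⟩
  · rw [hψA, hA.star_mulVec_dotProduct, mulVec_mulVec, hAA, smul_mulVec, dotProduct_smul,
      hdiag j hρP, hρtr, Complex.real_smul]
    push_cast
    exact mul_one_div_cancel (Nat.cast_ne_zero.mpr hd)
  · rw [hψA, sum_vecMulVec_mulVec_self_star A hm, hA.eq, hAA]
  · have hoverlap : ∀ j, star (ψ j) ⬝ᵥ m j = (√d * (R.trace.re / d) : ℝ) := fun j => by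
      rw [hψA, hA.star_mulVec_dotProduct, smul_mulVec, dotProduct_smul, hdiag j hRP,
        Complex.real_smul]
      push_cast
      rw [hR.isHermitian.ofReal_re_trace]
    simp only [hoverlap, Complex.normSq_ofReal, Finset.sum_const, Finset.card_univ,
      Fintype.card_fin, nsmul_eq_mul]
    field_simp
    rw [Real.sq_sqrt (Nat.cast_nonneg d)]

/-- the states `ψ_j = √(dρ_γ)·m_j` are unit vectors, their projectors sum
to `dρ_γ`, and the uniform-weight guessing probability is `(tr√ρ_γ)²/d`. -/
theorem noisy_state_FRIO_decomposition
    (d : ℕ) (hd : 2 ≤ d)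
    (φ : Fin d → ℂ) (hφ : star φ ⬝ᵥ φ = 1)
    (γ : ℝ) (hγ0 : 0 < γ) (hγ1 : γ < 1)
    (m : Fin d → (Fin d → ℂ))
    (hm : ∀ i j, star (m i) ⬝ᵥ m j = if i = j then 1 else 0)
    (hub : ∀ j, Complex.normSq (star φ ⬝ᵥ m j) = 1 / d)
    (ρ R : Matrix (Fin d) (Fin d) ℂ)
    (hρ : ρ = ((1 - γ : ℝ)) • vecMulVec φ (star φ) +
        ((γ / d : ℝ)) • (1 : Matrix (Fin d) (Fin d) ℂ))
    (hR : R.PosSemidef) (hRsq : R * R = ρ)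
    (ψ : Fin d → (Fin d → ℂ)) (hψ : ∀ j, ψ j = Real.sqrt d • (R *ᵥ m j)) :
    (∀ j, star (ψ j) ⬝ᵥ ψ j = 1) ∧
    (∑ j, vecMulVec (ψ j) (star (ψ j))) = (d : ℝ) • ρ ∧
    (∑ j, (1 / (d : ℝ)) * Complex.normSq (star (ψ j) ⬝ᵥ m j)) = (R.trace.re) ^ 2 / d :=
  noisy_state_FRIO_decomposition_general d φ hφ γ hγ0 hγ1 m hm hub ρ R hρ hR hRsq ψ hψ
end

section
/- For d ≥ 2 and ε_crit = d/(2(d + √d)), we have √(A_{ε_crit}) = (√d + 1)·√(ε_crit), where A_ε = d − ε(d−1). Consequently, for the state ρ = (1−ε_crit)|φ⟩⟨φ| + (ε_crit/d)I with φ = (1/√d)∑_x m_x, one has √(dρ)·m_x = √(d M_x)·φ for every x, where M_x = (1−ε_crit)|m_x⟩⟨m_x| + (ε_crit/d)I. -/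
open Matrix
open scoped ComplexOrder

/-!
At noise `ε`, both `ρ` and `M_x` have the form `(1 - ε) P + (ε / d) 1` with `P` the projection
onto a unit vector, so by uniqueness of positive square roots, `√ρ` and `√M_x` are `a P + b 1`
with `b = √(ε / d)` and `a² + 2ab = 1 - ε`. The critical value `ε_crit` is exactly the one for
which `a = √d b`. Since `⟨φ, m_x⟩ = 1 / √d`, this gives `a ⟨φ, m_x⟩ = b`, and then both `√ρ m_x`
and `√M_x φ` equal `b (φ + m_x)`.
-/

noncomputable def critNoise (d : ℝ) : ℝ := d / (2 * (d + √d))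

theorem critNoise_nonneg {d : ℝ} (hd : 0 ≤ d) : 0 ≤ critNoise d := by
  unfold critNoise
  positivity

theorem sub_critNoise_mul {d : ℝ} (hd : 0 < d) :
    d - critNoise d * (d - 1) = (√d + 1) ^ 2 * critNoise d := by
  have hs : √d ^ 2 = d := Real.sq_sqrt hd.le
  have : 0 < √d := Real.sqrt_pos.mpr hd
  unfold critNoise
  field_simp
  linear_combination (-1) * hs

theorem sqrt_sub_critNoise_mul {d : ℝ} (hd : 0 < d) :
    √(d - critNoise d * (d - 1)) = (√d + 1) * √(critNoise d) := by
  rw [sub_critNoise_mul hd, Real.sqrt_mul (sq_nonneg _), Real.sqrt_sq (by positivity)]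

theorem mul_self_add_two_mul_eq_one_sub_critNoise {d b : ℝ} (hd : 0 < d)
    (hb : b * b = critNoise d / d) :
    √d * b * (√d * b) + 2 * (√d * b) * b = 1 - critNoise d := by
  have hs : √d * √d = d := Real.mul_self_sqrt hd.le
  have : 0 < √d := Real.sqrt_pos.mpr hd
  calc √d * b * (√d * b) + 2 * (√d * b) * b = (√d * √d + 2 * √d) * (b * b) := by ring
    _ = 1 - critNoise d := by
      rw [hb, hs]
      unfold critNoise
      field_simp
      ring

theorem IsIdempotentElem.smul_add_smul_one_mul_self {S R : Type*} [CommSemiring S] [Semiring R]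
    [Algebra S R] {P : R} (hP : IsIdempotentElem P) (a b : S) :
    (a • P + b • 1) * (a • P + b • 1) = (a * a + 2 * a * b) • P + (b * b) • 1 := by
  simp only [add_mul, mul_add, smul_mul_smul, hP.eq, mul_one, one_mul]
  module

namespace Matrix

variable {𝕜 ι n : Type*} [RCLike 𝕜] [Fintype n]

theorem isIdempotentElem_vecMulVec_self_star {v : n → 𝕜} (hv : star v ⬝ᵥ v = 1) :
    IsIdempotentElem (vecMulVec v (star v)) := by
  rw [IsIdempotentElem, vecMulVec_mul_vecMulVec, hv, one_smul]

section Orthonormal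

variable [Fintype ι] [DecidableEq ι] {m : ι → n → 𝕜}

theorem star_smul_sum_dotProduct_of_orthonormal
    (hm : ∀ i j, star (m i) ⬝ᵥ m j = if i = j then 1 else 0) (c : ℝ) (x : ι) :
    star (c • ∑ i, m i) ⬝ᵥ m x = c := by
  rw [star_smul, star_sum, smul_dotProduct, sum_dotProduct]
  simp [hm, RCLike.real_smul_eq_coe_mul]

theorem dotProduct_smul_sum_of_orthonormal
    (hm : ∀ i j, star (m i) ⬝ᵥ m j = if i = j then 1 else 0) (c : ℝ) (x : ι) :
    star (m x) ⬝ᵥ (c • ∑ i, m i) = c := by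
  rw [dotProduct_smul, dotProduct_sum]
  simp [hm, RCLike.real_smul_eq_coe_mul]

theorem star_dotProduct_self_of_orthonormal [Nonempty ι]
    (hm : ∀ i j, star (m i) ⬝ᵥ m j = if i = j then 1 else 0) :
    star ((√(Fintype.card ι))⁻¹ • ∑ i, m i) ⬝ᵥ ((√(Fintype.card ι))⁻¹ • ∑ i, m i) = 1 := by
  have hcard : (0 : ℝ) < Fintype.card ι := by exact_mod_cast Fintype.card_pos
  rw [dotProduct_smul, dotProduct_sum]
  simp only [star_smul_sum_dotProduct_of_orthonormal hm, Finset.sum_const, Finset.card_univ,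
    nsmul_eq_mul, RCLike.real_smul_eq_coe_mul, ← mul_assoc]
  norm_cast
  field_simp
  rw [Real.sq_sqrt hcard.le]

end Orthonormal

variable [DecidableEq n]

theorem posSemidef_smul_vecMulVec_self_star_add_smul_one (v : n → 𝕜) {a b : ℝ}
    (ha : 0 ≤ a) (hb : 0 ≤ b) : (a • vecMulVec v (star v) + b • 1 : Matrix n n 𝕜).PosSemidef :=
  ((posSemidef_vecMulVec_self_star v).smul ha).add (PosSemidef.one.smul hb)

open scoped MatrixOrder in
theorem eq_smul_vecMulVec_add_smul_one_of_mul_self_eq {v : n → 𝕜} (hv : star v ⬝ᵥ v = 1)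
    {a b : ℝ} (ha : 0 ≤ a) (hb : 0 ≤ b) {R : Matrix n n 𝕜} (hR : R.PosSemidef)
    (hRR : R * R = (a * a + 2 * a * b) • vecMulVec v (star v) + (b * b) • 1) :
    R = a • vecMulVec v (star v) + b • 1 := by
  refine (CFC.mul_self_eq_mul_self_iff R _ hR.nonneg
    (posSemidef_smul_vecMulVec_self_star_add_smul_one v ha hb).nonneg).mp ?_
  rw [hRR, (isIdempotentElem_vecMulVec_self_star hv).smul_add_smul_one_mul_self]

theorem eq_sqrt_smul_vecMulVec_add_smul_one_of_mul_self_eq_critNoise {d : ℝ} (hd : 0 < d)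
    {v : n → 𝕜} (hv : star v ⬝ᵥ v = 1) {R : Matrix n n 𝕜} (hR : R.PosSemidef)
    (hRR : R * R = (1 - critNoise d) • vecMulVec v (star v) + (critNoise d / d) • 1) :
    R = (√d * √(critNoise d / d)) • vecMulVec v (star v) + √(critNoise d / d) • 1 := by
  have hb : √(critNoise d / d) * √(critNoise d / d) = critNoise d / d :=
    Real.mul_self_sqrt (div_nonneg (critNoise_nonneg hd.le) hd.le)
  refine eq_smul_vecMulVec_add_smul_one_of_mul_self_eq hv (by positivity) (by positivity) hR ?_
  rw [hRR, mul_self_add_two_mul_eq_one_sub_critNoise hd hb, hb]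

theorem smul_vecMulVec_self_star_add_smul_one_mulVec {u w : n → 𝕜} {c : ℝ}
    (huw : star u ⬝ᵥ w = c) (a b : ℝ) :
    (a • vecMulVec u (star u) + b • 1) *ᵥ w = (a * c) • u + b • w := by
  rw [add_mulVec, smul_mulVec, smul_mulVec, one_mulVec, vecMulVec_mulVec, huw]
  ext i
  simp [mul_smul, RCLike.real_smul_eq_coe_mul]

theorem smul_vecMulVec_self_star_add_smul_one_mulVec_comm {u w : n → 𝕜} {c : ℝ}
    (huw : star u ⬝ᵥ w = c) (hwu : star w ⬝ᵥ u = c) {a b : ℝ} (hab : a * c = b) :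
    (a • vecMulVec u (star u) + b • 1) *ᵥ w = (a • vecMulVec w (star w) + b • 1) *ᵥ u := by
  rw [smul_vecMulVec_self_star_add_smul_one_mulVec huw,
    smul_vecMulVec_self_star_add_smul_one_mulVec hwu, hab, add_comm]

end Matrix

/-- at the critical noise `ε_crit = d/(2(d+√d))` one has
`√A_{ε_crit} = (√d+1)√ε_crit`, and the state and measurement square-root vectors align:
`√(dρ)·m_x = √(dM_x)·φ` for every `x`. -/
theorem critical_noise_alignment
    (d : ℕ) (hd : 2 ≤ d)
    (m : Fin d → (Fin d → ℂ))
    (hm : ∀ i j, star (m i) ⬝ᵥ m j = if i = j then 1 else 0)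
    (φ : Fin d → ℂ) (hφ : φ = (Real.sqrt d)⁻¹ • ∑ x, m x)
    (εc : ℝ) (hεc : εc = (d : ℝ) / (2 * ((d : ℝ) + Real.sqrt d)))
    (A : ℝ) (hA : A = (d : ℝ) - εc * ((d : ℝ) - 1))
    (ρ : Matrix (Fin d) (Fin d) ℂ)
    (hρ : ρ = ((1 - εc : ℝ)) • vecMulVec φ (star φ) +
        ((εc / d : ℝ)) • (1 : Matrix (Fin d) (Fin d) ℂ))
    (M : Fin d → Matrix (Fin d) (Fin d) ℂ)
    (hM : ∀ x, M x = ((1 - εc : ℝ)) • vecMulVec (m x) (star (m x)) +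
        ((εc / d : ℝ)) • (1 : Matrix (Fin d) (Fin d) ℂ))
    (Rρ : Matrix (Fin d) (Fin d) ℂ) (hRρ : Rρ.PosSemidef) (hRρsq : Rρ * Rρ = ρ)
    (RM : Fin d → Matrix (Fin d) (Fin d) ℂ)
    (hRM : ∀ x, (RM x).PosSemidef) (hRMsq : ∀ x, RM x * RM x = M x) :
    Real.sqrt A = (Real.sqrt d + 1) * Real.sqrt εc ∧
    ∀ x, Real.sqrt d • (Rρ *ᵥ m x) = Real.sqrt d • ((RM x) *ᵥ φ) := by
  have hdpos : (0 : ℝ) < d := by exact_mod_cast (by omega : 0 < d)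
  have : Nonempty (Fin d) := ⟨⟨0, by omega⟩⟩
  replace hεc : εc = critNoise d := hεc
  subst hεc hA
  refine ⟨sqrt_sub_critNoise_mul hdpos, fun x => congrArg _ ?_⟩
  have hφφ : star φ ⬝ᵥ φ = 1 := by simpa [hφ] using star_dotProduct_self_of_orthonormal hm
  have hmm : star (m x) ⬝ᵥ m x = 1 := by simpa using hm x x
  rw [eq_sqrt_smul_vecMulVec_add_smul_one_of_mul_self_eq_critNoise hdpos hφφ hRρ (hRρsq.trans hρ),
    eq_sqrt_smul_vecMulVec_add_smul_one_of_mul_self_eq_critNoise hdpos hmm (hRM x)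
      ((hRMsq x).trans (hM x))]
  refine smul_vecMulVec_self_star_add_smul_one_mulVec_comm
    (by rw [hφ]; exact star_smul_sum_dotProduct_of_orthonormal hm _ x)
    (by rw [hφ]; exact dotProduct_smul_sum_of_orthonormal hm _ x) ?_
  have : 0 < √(d : ℝ) := Real.sqrt_pos.mpr hdpos
  field_simp
end

section
/- For every d ≥ 2 and 0 < ε ≤ ε_crit = d/(2(d+√d)), define κ_ε = 4ε(d − (d−1)ε)/d. Then κ_ε − 2ε = (2ε/d)(d − 2(d−1)ε) > 0 for 0 < ε < ε_crit, and consequently the inequality (1/d)·((tr√ρ_ε)² − ε(d−1))² > (1/d)·(tr√ρ_{2ε})² holds for 0 < ε ≤ ε_crit, where (tr√ρ_x)² = (√(d − x(d−1)) + (d−1)√x)²/d. -/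
set_option maxHeartbeats 2000000

private theorem keyP (t s : ℝ) (ht : 2 ≤ t^2) (ht0 : 0 < t) (hts : t ≤ s) (hsD : s < t^2)
    (he : 0 ≤ t^4 - t^2*s - s^2) :
    (t^2-1) * (t^4 - t^2*s - s^2)^2 < (t^2-2)^2 * s^2 * (t^4 - s^2) := by
  have hs0 : 0 < s := lt_of_lt_of_le ht0 hts
  have h1 : 0 ≤ t^2 - t - 1 := by nlinarith [mul_pos hs0 hs0, mul_pos ht0 hs0]
  have ht1 : 1 < t := by nlinarith
  have hgt : 0 < t^2 - 2 := by nlinarith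
  have h2 : (t^2-1) * (t^4 - t^2*s - s^2) ≤ (t^2-2)^2 * s^2 := by
    nlinarith [mul_nonneg (sub_nonneg.2 hts) h1, sq_nonneg (s-t), mul_nonneg (mul_nonneg (sub_nonneg.2 hts) h1) hs0.le, mul_nonneg (mul_nonneg (sub_nonneg.2 hts) h1) ht0.le, mul_nonneg h1 h1, mul_pos ht0 hs0]
  nlinarith [mul_le_mul_of_nonneg_right h2 he, mul_pos (mul_pos (mul_pos (mul_pos hgt hgt) hs0) hs0) (mul_pos (mul_pos ht0 ht0) hs0)]

private theorem main_ineq (D c ε t s a b r q : ℝ)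
    (hD2 : 2 ≤ D) (hcdef : c = D - 1) (hε0 : 0 < ε)
    (ht2 : t^2 = D) (ht0 : 0 < t)
    (hsdef : s = D - 2*ε*c) (hst : t ≤ s)
    (ha2 : a^2 = D - ε*c) (ha0 : 0 < a)
    (hb2 : b^2 = ε) (hb0 : 0 < b)
    (hr2 : r^2 = s) (hr0 : 0 ≤ r)
    (hq2 : q^2 = 2*ε) (hq0 : 0 ≤ q) :
    (1/D) * ((a + c*b)^2/D - ε*c)^2 > (1/D) * ((r + c*q)^2/D) := by
  have hD0 : 0 < D := by linarith
  have hc1 : (1:ℝ) ≤ c := by linarith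
  have hs0 : 0 < s := lt_of_lt_of_le ht0 hst
  have hsD : s < D := by nlinarith
  have hm0 : 0 < a*b := mul_pos ha0 hb0
  have habs : (a*b)^2 = (D - ε*c)*ε := by rw [mul_pow, ha2, hb2]
  have hm2 : 4*c*(a*b)^2 = D^2 - s^2 := by rw [habs, hsdef]; ring
  -- key3 : s * (2a + (c-1)b)^2 > 2 D^2
  have key3 : s * (2*a + (c-1)*b)^2 > 2*D^2 := by
    have key4 : s*(D+s) + 2*(c-1)*s*(a*b) > D^2 := by
      rcases lt_or_ge (D^2 - D*s - s^2) 0 with hcase | hcase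
      · nlinarith [mul_nonneg (mul_nonneg (by linarith : (0:ℝ) ≤ c - 1) hs0.le) hm0.le]
      · have hP := keyP t s (by nlinarith) ht0 hst (by nlinarith)
          (by nlinarith [ht2])
        have hcc : c = t^2 - 1 := by rw [hcdef, ← ht2]
        have hlt : c * (D^2 - D*s - s^2)^2 < (c-1)^2 * s^2 * (D^2 - s^2) := by
          rw [hcc, ← ht2]; nlinarith [hP]
        have hsq : (D^2 - D*s - s^2)^2 < (2*(c-1)*s*(a*b))^2 := by
          have h4 : c * (D^2 - D*s - s^2)^2 < c * (2*(c-1)*s*(a*b))^2 := by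
            have e4 : c * (2*(c-1)*s*(a*b))^2 = (c-1)^2 * s^2 * (4*c*(a*b)^2) := by
              ring
            rw [e4, hm2]; exact hlt
          exact lt_of_mul_lt_mul_left h4 (by linarith)
        have hnn : 0 ≤ 2*(c-1)*s*(a*b) :=
          mul_nonneg (mul_nonneg (by linarith) hs0.le) hm0.le
        have := lt_of_pow_lt_pow_left₀ 2 hnn hsq
        linarith
    have e6 : s * (2*a + (c-1)*b)^2
        = s*(D+s) * 2 + 4*(c-1)*(s*(a*b)) + (c-1)^2*ε*s := by
      have e7 : (2*a + (c-1)*b)^2 = 4*a^2 + 4*(c-1)*(a*b) + (c-1)^2*b^2 := by ring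
      rw [e7, ha2, hb2, hsdef]; ring
    have e8 : 0 ≤ (c-1)^2*ε*s :=
      mul_nonneg (mul_nonneg (sq_nonneg _) hε0.le) hs0.le
    linarith [key4, e6, e8]
  -- key2 : D*(q*r) < s*(2ab + (c-1)ε)
  have key2 : D*(q*r) < s*(2*(a*b) + (c-1)*ε) := by
    have hx : 0 < s*(2*(a*b) + (c-1)*ε) := by
      apply mul_pos hs0
      have : 0 ≤ (c-1)*ε := mul_nonneg (by linarith) hε0.le
      linarith
    have hy : 0 ≤ D*(q*r) := mul_nonneg hD0.le (mul_nonneg hq0 hr0)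
    have hsq : (D*(q*r))^2 < (s*(2*(a*b) + (c-1)*ε))^2 := by
      have e1 : (D*(q*r))^2 = 2*D^2*s*b^2 := by
        rw [mul_pow, mul_pow, hq2, hr2, hb2]; ring
      have e2 : (s*(2*(a*b) + (c-1)*ε))^2 = s*b^2*(s*(2*a + (c-1)*b)^2) := by
        rw [← hb2]; ring
      rw [e1, e2]
      calc 2*D^2*s*b^2 = s*b^2*(2*D^2) := by ring
        _ < s*b^2*(s*(2*a + (c-1)*b)^2) :=
            mul_lt_mul_of_pos_left key3 (mul_pos hs0 (pow_pos hb0 2))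
    exact lt_of_pow_lt_pow_left₀ 2 hx.le hsq
  -- assemble
  have hX : (a + c*b)^2/D - ε*c = (s + 2*c*(a*b))/D := by
    field_simp
    linear_combination ha2 + c^2*hb2 + ε*c*hcdef - hsdef
  rw [hX]
  have key : D*((r + c*q)^2) < (s + 2*c*(a*b))^2 := by
    have f1 : D*((r + c*q)^2) = D*s + 2*c*(D*(q*r)) + 2*c^2*ε*D := by
      have e0 : (r + c*q)^2 = r^2 + 2*c*(q*r) + c^2*q^2 := by ring
      rw [e0, hr2, hq2]; ring
    have f2 : (s + 2*c*(a*b))^2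
        = s^2 + 4*c*(s*(a*b)) + (4*c^2*ε*D - 4*c^3*ε^2) := by
      linear_combination 4*c^2*habs
    have key2c := mul_lt_mul_of_pos_left key2 (show (0:ℝ) < 2*c by linarith)
    have e1 : s^2 - D*s = -(2*ε*c)*s := by rw [hsdef]; ring
    have e3 : 2*c^2*ε*s = 2*c^2*ε*D - 4*c^3*ε^2 := by rw [hsdef]; ring
    linarith [f1, f2, key2c, e1, e3]
  have hD3 : 0 < D^3 := by positivity
  have h1 : (1/D) * ((r + c*q)^2/D) = (D*((r + c*q)^2))/D^3 := by
    field_simp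
  have h2 : (1/D) * ((s + 2*c*(a*b))/D)^2 = ((s + 2*c*(a*b))^2)/D^3 := by
    field_simp
  rw [gt_iff_lt, h1, h2]
  exact (div_lt_div_iff_of_pos_right hD3).2 key

/-- for `0 < ε ≤ ε_crit`, with `κ_ε = 4ε(d−(d−1)ε)/d`, one has
`κ_ε − 2ε = (2ε/d)(d − 2(d−1)ε)`, positive for `ε < ε_crit`, and the joint-noise
guessing amplitude inequality `(1/d)((tr√ρ_ε)² − ε(d−1))² > (1/d)(tr√ρ_{2ε})²`. -/
theorem joint_noise_amplitude_inequality
    (d : ℕ) (hd : 2 ≤ d) (ε εc : ℝ)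
    (hεc : εc = (d : ℝ) / (2 * ((d : ℝ) + Real.sqrt d)))
    (hε0 : 0 < ε) (hε1 : ε ≤ εc)
    (κ : ℝ) (hκ : κ = 4 * ε * ((d : ℝ) - ((d : ℝ) - 1) * ε) / d)
    (tsq : ℝ → ℝ)
    (htsq : ∀ x, tsq x =
      (Real.sqrt ((d : ℝ) - x * ((d : ℝ) - 1)) + ((d : ℝ) - 1) * Real.sqrt x) ^ 2 / d) :
    κ - 2 * ε = (2 * ε / d) * ((d : ℝ) - 2 * ((d : ℝ) - 1) * ε) ∧
    (ε < εc → 0 < κ - 2 * ε) ∧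
    (1 / (d : ℝ)) * (tsq ε - ε * ((d : ℝ) - 1)) ^ 2 > (1 / (d : ℝ)) * tsq (2 * ε) := by
  have hd2 : (2:ℝ) ≤ (d:ℝ) := by exact_mod_cast hd
  have hD0 : (0:ℝ) < (d:ℝ) := by linarith
  set t := Real.sqrt (d:ℝ) with htdef
  have ht2 : t^2 = (d:ℝ) := Real.sq_sqrt hD0.le
  have ht0 : 0 < t := Real.sqrt_pos.2 hD0
  have hdt : (0:ℝ) < 2*((d:ℝ) + t) := by positivity
  have hεD : ε * (2*((d:ℝ) + t)) ≤ (d:ℝ) := by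
    rw [hεc] at hε1; exact (le_div_iff₀ hdt).mp hε1
  have hst : t ≤ (d:ℝ) - 2*ε*((d:ℝ)-1) := by
    nlinarith [mul_le_mul_of_nonneg_left hεD (show (0:ℝ) ≤ (d:ℝ)-1 by linarith),
      ht2, ht0, hdt]
  have part1 : κ - 2 * ε = (2 * ε / d) * ((d : ℝ) - 2 * ((d : ℝ) - 1) * ε) := by
    rw [hκ]; field_simp; ring
  refine ⟨part1, ?_, ?_⟩
  · intro _
    rw [part1]
    apply mul_pos (by positivity)
    nlinarith [hst, ht0]
  · rw [htsq ε, htsq (2*ε)]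
    have hεnn : 0 ≤ ε * ((d:ℝ)-1) := mul_nonneg hε0.le (by linarith)
    have ha0 : 0 < (d:ℝ) - ε*((d:ℝ)-1) := by nlinarith [hst, ht0]
    have hr0 : 0 < (d:ℝ) - 2*ε*((d:ℝ)-1) := by linarith
    exact main_ineq (d:ℝ) ((d:ℝ)-1) ε t ((d:ℝ) - 2*ε*((d:ℝ)-1))
      (Real.sqrt ((d:ℝ) - ε*((d:ℝ)-1))) (Real.sqrt ε)
      (Real.sqrt ((d:ℝ) - 2*ε*((d:ℝ)-1))) (Real.sqrt (2*ε))
      hd2 rfl hε0 ht2 ht0 rfl hst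
      (Real.sq_sqrt ha0.le) (Real.sqrt_pos.2 ha0)
      (Real.sq_sqrt hε0.le) (Real.sqrt_pos.2 hε0)
      (Real.sq_sqrt hr0.le) (Real.sqrt_nonneg _)
      (Real.sq_sqrt (by linarith)) (Real.sqrt_nonneg _)
end
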